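/- arXiv:2510.12760 — 4 statements merged into one kernel-verified Lean document; each statement's English description precedes it below -/
import Mathlib

section
/- Let r ≥ 3 be an integer, k a real number, and let λ₁, λ₂ be positive real numbers with λ₁ > r − 2 and λ₂ = (r − 1)/(λ₁ − r + 2). Define f : ℝʳ → ℝ by f(z₁, …, z_r) = λ₁ Σ_{i=1}^{r−1} z_i² + λ₂ z_r² − 2 Σ_{1 ≤ i < j ≤ r} z_i z_j. Then for every (z₁, …, z_r) ∈ ℝʳ with z₁ + ⋯ + z_r = k one has f(z₁, …, z_r) ≥ 0, and f(z₁, …, z_r) = 0 if and only if z₁ = ⋯ = z_{r−1} = k/(λ₁ + 1) and z_r = k(λ₁ − r + 2)/(λ₁ + 1). In particular, the constrained minimization problem min f over the hyperplane {z ∈ ℝʳ : z₁ + ⋯ + z_r = k} has global minimum value 0, attained exactly at this point. -/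
/-!
Write `s = z₀ + ⋯ + z_{n-1}`, `d = λ₁ - n + 1 > 0` (here `n = r - 1`), and use
`2 ∑_{i<j} zᵢ zⱼ = (∑ zᵢ)² - ∑ zᵢ²` together with `∑_{i<n} zᵢ² = ∑_{i<n} (zᵢ - s/n)² + s²/n`.
With `λ₂ = n/d` the form becomes the sum of squares
`(λ₁ + 1) ∑_{i<n} (zᵢ - s/n)² + (d s - n z_n)² / (n d)`:
the compatibility condition is exactly what makes the remaining binary form in `(s, z_n)`
a perfect square. It vanishes iff all `zᵢ` (`i < n`) equal `s/n` and `d s = n z_n`, which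
together with `s + z_n = k` pins down the stated point.
-/

open Finset

lemma sq_sum_range_eq (z : ℕ → ℝ) (n : ℕ) :
    (∑ i ∈ range n, z i) ^ 2
      = ∑ i ∈ range n, z i ^ 2 + 2 * ∑ j ∈ range n, ∑ i ∈ range j, z i * z j := by
  induction n with
  | zero => simp
  | succ n ih =>
    rw [sum_range_succ, sum_range_succ, sum_range_succ, ← sum_mul]
    linear_combination ih

lemma sum_sq_sub_mean {ι : Type*} (s : Finset ι) (z : ι → ℝ) :
    ∑ i ∈ s, (z i - (∑ j ∈ s, z j) / #s) ^ 2
      = ∑ i ∈ s, z i ^ 2 - (∑ j ∈ s, z j) ^ 2 / #s := by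
  rcases s.eq_empty_or_nonempty with rfl | hs
  · simp
  have hcard : (#s : ℝ) ≠ 0 := by exact_mod_cast hs.card_ne_zero
  simp only [sub_sq, sum_add_distrib, sum_sub_distrib, ← sum_mul, ← mul_sum, sum_const,
    nsmul_eq_mul]
  field_simp
  ring

/-- The form of the paper in the variables `z 0, …, z n`, i.e. with `r = n + 1`. -/
def tripathiForm (l1 l2 : ℝ) (n : ℕ) (z : ℕ → ℝ) : ℝ :=
  l1 * ∑ i ∈ range n, z i ^ 2 + l2 * z n ^ 2
    - 2 * ∑ j ∈ range (n + 1), ∑ i ∈ range j, z i * z j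

lemma tripathiForm_eq (l : ℝ) (n : ℕ) (hn : (n : ℝ) ≠ 0) (hd : l - n + 1 ≠ 0) (z : ℕ → ℝ) :
    tripathiForm l (n / (l - n + 1)) n z
      = (l + 1) * ∑ i ∈ range n, (z i - (∑ j ∈ range n, z j) / n) ^ 2
        + ((l - n + 1) * ∑ i ∈ range n, z i - n * z n) ^ 2 / (n * (l - n + 1)) := by
  have h := sq_sum_range_eq z (n + 1)
  rw [sum_range_succ z, sum_range_succ (z · ^ 2)] at h
  have hQ := sum_sq_sub_mean (range n) z
  rw [card_range] at hQ
  rw [tripathiForm, hQ]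
  field_simp
  linear_combination ((n : ℝ) * (l - n + 1)) * h

theorem tripathiForm_nonneg_and_eq_zero_iff (l : ℝ) (n : ℕ) (hn : n ≠ 0) (hl : (n : ℝ) - 1 < l)
    (z : ℕ → ℝ) (k : ℝ) (hk : ∑ i ∈ range (n + 1), z i = k) :
    0 ≤ tripathiForm l (n / (l - n + 1)) n z ∧
      (tripathiForm l (n / (l - n + 1)) n z = 0 ↔
        (∀ i < n, z i = k / (l + 1)) ∧ z n = k * (l - n + 1) / (l + 1)) := by
  have hn' : (0 : ℝ) < n := by exact_mod_cast Nat.pos_of_ne_zero hn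
  have hd : 0 < l - n + 1 := by linarith
  have hl1 : 0 < l + 1 := by linarith
  rw [tripathiForm_eq l n hn'.ne' hd.ne']
  set s := ∑ i ∈ range n, z i with hs_def
  have hst : s + z n = k := by rwa [sum_range_succ] at hk
  refine ⟨by positivity, ?_⟩
  rw [add_eq_zero_iff_of_nonneg (by positivity) (by positivity), mul_eq_zero_iff_left hl1.ne',
    sum_eq_zero_iff_of_nonneg fun _ _ => sq_nonneg _, div_eq_zero_iff,
    or_iff_left (by positivity)]
  simp only [mem_range, sq_eq_zero_iff, sub_eq_zero]
  constructor
  · rintro ⟨hz, hcross⟩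
    have hs : s / n = k / (l + 1) := by
      field_simp
      linear_combination hcross + n * hst
    refine ⟨fun i hi => (hz i hi).trans hs, ?_⟩
    field_simp
    linear_combination (l - n + 1) * hst - hcross
  · rintro ⟨hz, hzn⟩
    have hs : s = n * (k / (l + 1)) := by
      rw [hs_def, sum_congr rfl fun i hi => hz i (mem_range.mp hi)]
      simp
    refine ⟨fun i hi => by rw [hz i hi, hs]; field_simp, ?_⟩
    rw [hs, hzn]
    field_simp

theorem tripathi_constrained_extremum_general
    (r : ℕ) (hr : 3 ≤ r) (k : ℝ) (l1 l2 : ℝ)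
    (hl1' : (r : ℝ) - 2 < l1)
    (hl2' : l2 = ((r : ℝ) - 1) / (l1 - (r : ℝ) + 2))
    (z : ℕ → ℝ) (hz : ∑ i ∈ Finset.range r, z i = k) :
    0 ≤ l1 * (∑ i ∈ Finset.range (r - 1), (z i) ^ 2) + l2 * (z (r - 1)) ^ 2
        - 2 * ∑ j ∈ Finset.range r, ∑ i ∈ Finset.range j, z i * z j
    ∧ (l1 * (∑ i ∈ Finset.range (r - 1), (z i) ^ 2) + l2 * (z (r - 1)) ^ 2
        - 2 * ∑ j ∈ Finset.range r, ∑ i ∈ Finset.range j, z i * z j = 0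
      ↔ (∀ i < r - 1, z i = k / (l1 + 1))
        ∧ z (r - 1) = k * (l1 - (r : ℝ) + 2) / (l1 + 1)) := by
  obtain ⟨n, rfl⟩ : ∃ n, r = n + 1 := ⟨r - 1, by omega⟩
  have hl2 : l2 = n / (l1 - n + 1) := by rw [hl2']; push_cast; ring_nf
  have hd : l1 - ((n + 1 : ℕ) : ℝ) + 2 = l1 - n + 1 := by push_cast; ring
  rw [hl2, hd, Nat.add_sub_cancel]
  exact tripathiForm_nonneg_and_eq_zero_iff l1 n (by omega) (by push_cast at hl1'; linarith) z k hz

/-- Tripathi's constrained-extremum lemma: the quadratic form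
`f(z) = λ₁ ∑_{i=1}^{r-1} z_i² + λ₂ z_r² − 2 ∑_{1≤i<j≤r} z_i z_j`
is nonnegative on the hyperplane `z₁ + ⋯ + z_r = k` when
`λ₂ = (r−1)/(λ₁ − r + 2)`, and vanishes exactly at the indicated point. -/
theorem tripathi_constrained_extremum
    (r : ℕ) (hr : 3 ≤ r) (k : ℝ) (l1 l2 : ℝ)
    (hl1 : 0 < l1) (hl2 : 0 < l2)
    (hl1' : (r : ℝ) - 2 < l1)
    (hl2' : l2 = ((r : ℝ) - 1) / (l1 - (r : ℝ) + 2))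
    (z : ℕ → ℝ) (hz : ∑ i ∈ Finset.range r, z i = k) :
    0 ≤ l1 * (∑ i ∈ Finset.range (r - 1), (z i) ^ 2) + l2 * (z (r - 1)) ^ 2
        - 2 * ∑ j ∈ Finset.range r, ∑ i ∈ Finset.range j, z i * z j
    ∧ (l1 * (∑ i ∈ Finset.range (r - 1), (z i) ^ 2) + l2 * (z (r - 1)) ^ 2
        - 2 * ∑ j ∈ Finset.range r, ∑ i ∈ Finset.range j, z i * z j = 0
      ↔ (∀ i < r - 1, z i = k / (l1 + 1))
        ∧ z (r - 1) = k * (l1 - (r : ℝ) + 2) / (l1 + 1)) :=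
  tripathi_constrained_extremum_general r hr k l1 l2 hl1' hl2' z hz
end

section
/- Let r ≥ 3 be an integer and b₁, …, b_r real numbers. Then ((2r − 3)/2) Σ_{i=1}^{r−1} b_i² + 2(r − 1) b_r² − 2 Σ_{1 ≤ i < j ≤ r} b_i b_j ≥ 0, with equality if and only if b₁ = b₂ = ⋯ = b_{r−1} = 2 b_r. -/
/-!
The form is a sum of squares: it equals
`∑_{i < j < r-1} (b i - b j)² + ½ ∑_{i < r-1} (b i - 2 b (r-1))²`.
Both parts vanish when `b i = 2 b (r-1)` for all `i < r - 1`, and the second part vanishes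
only then.
-/

open Finset

section Pairwise

variable {R : Type*} [CommRing R]

lemma sum_range_sum_range_add (f : ℕ → R) (n : ℕ) :
    ∑ j ∈ range n, ∑ i ∈ range j, (f i + f j) = ((n : R) - 1) * ∑ i ∈ range n, f i := by
  induction n with
  | zero => simp
  | succ n ih =>
    rw [sum_range_succ, ih, sum_add_distrib, sum_const, card_range, nsmul_eq_mul,
      sum_range_succ f]
    push_cast
    ring

lemma sum_range_sum_range_sub_sq (f : ℕ → R) (n : ℕ) :
    ∑ j ∈ range n, ∑ i ∈ range j, (f i - f j) ^ 2
      = ((n : R) - 1) * ∑ i ∈ range n, f i ^ 2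
        - 2 * ∑ j ∈ range n, ∑ i ∈ range j, f i * f j := by
  simp only [sub_sq', ← sum_range_sum_range_add (f · ^ 2), mul_sum, ← sum_sub_distrib]
  ring_nf

end Pairwise

lemma sum_range_sub_sq_eq_zero_iff (f : ℕ → ℝ) (c : ℝ) (n : ℕ) :
    ∑ i ∈ range n, (f i - c) ^ 2 = 0 ↔ ∀ i < n, f i = c := by
  simp [sum_eq_zero_iff_of_nonneg fun i _ => sq_nonneg (f i - c), sub_eq_zero]

lemma sum_range_sum_range_sub_sq_eq_zero (f : ℕ → ℝ) (c : ℝ) (n : ℕ)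
    (hf : ∀ i < n, f i = c) :
    ∑ j ∈ range n, ∑ i ∈ range j, (f i - f j) ^ 2 = 0 :=
  sum_eq_zero fun j hj => sum_eq_zero fun i hi => by
    rw [mem_range] at hi hj
    rw [hf i (hi.trans hj), hf j hj, sub_self, sq, mul_zero]

lemma casorati_form_eq_sum_sq (b : ℕ → ℝ) {r : ℕ} (hr : 0 < r) :
    ((2 * (r : ℝ) - 3) / 2) * (∑ i ∈ range (r - 1), b i ^ 2)
        + 2 * ((r : ℝ) - 1) * b (r - 1) ^ 2
        - 2 * ∑ j ∈ range r, ∑ i ∈ range j, b i * b j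
      = ∑ j ∈ range (r - 1), ∑ i ∈ range j, (b i - b j) ^ 2
        + (∑ i ∈ range (r - 1), (b i - 2 * b (r - 1)) ^ 2) / 2 := by
  obtain ⟨n, rfl⟩ := Nat.exists_eq_add_one_of_ne_zero hr.ne'
  rw [Nat.add_sub_cancel, sum_range_succ, ← sum_mul, sum_range_sum_range_sub_sq]
  simp only [sub_sq, sum_add_distrib, sum_sub_distrib, ← sum_mul, ← mul_sum, sum_const, card_range,
    nsmul_eq_mul]
  push_cast
  ring

/-- The quadratic inequality (instance `λ₁ = (2r−3)/2`, `λ₂ = 2(r−1)`) used in the proof of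
the second (supremum) Casorati inequality of Theorem 2.1. -/
theorem casorati_quadratic_sup
    (r : ℕ) (hr : 3 ≤ r) (b : ℕ → ℝ) :
    0 ≤ ((2 * (r : ℝ) - 3) / 2) * (∑ i ∈ Finset.range (r - 1), (b i) ^ 2)
        + 2 * ((r : ℝ) - 1) * (b (r - 1)) ^ 2
        - 2 * ∑ j ∈ Finset.range r, ∑ i ∈ Finset.range j, b i * b j
    ∧ (((2 * (r : ℝ) - 3) / 2) * (∑ i ∈ Finset.range (r - 1), (b i) ^ 2)
        + 2 * ((r : ℝ) - 1) * (b (r - 1)) ^ 2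
        - 2 * ∑ j ∈ Finset.range r, ∑ i ∈ Finset.range j, b i * b j = 0
      ↔ ∀ i < r - 1, b i = 2 * b (r - 1)) := by
  rw [casorati_form_eq_sum_sq b (by omega : 0 < r)]
  refine ⟨by positivity, ?_⟩
  rw [add_eq_zero_iff_of_nonneg (by positivity) (by positivity), div_eq_zero_iff,
    or_iff_left two_ne_zero, sum_range_sub_sq_eq_zero_iff]
  exact ⟨And.right, fun h => ⟨sum_range_sum_range_sub_sq_eq_zero b _ _ h, h⟩⟩
end

section
/- Let r ≥ 3 be an integer, F a real inner product space, and B_{ij} ∈ F for 1 ≤ i, j ≤ r vectors with B_{ij} = B_{ji} for all i, j. Then (2r − 1) Σ_{i,j=1}^{r} ‖B_{ij}‖² − ((2r − 1)/2) Σ_{i,j=1}^{r−1} ‖B_{ij}‖² ≥ ‖ Σ_{i=1}^{r} B_{ii} ‖², with equality if and only if B_{ij} = 0 for all i ≠ j and B_{11} = B_{22} = ⋯ = B_{r−1,r−1} = 2 B_{rr}. -/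
/-!
Write `r = m + 1`. The right-hand side is
`(2m + 1) · (Σ_{i,j ≤ m} ‖B i j‖² - ½ Σ_{i,j < m} ‖B i j‖²)`, and dropping the off-diagonal entries from the bracket leaves `½ Σ_{i < m} ‖B i i‖² + ‖B m m‖²`,
with equality iff those entries vanish. That this diagonal part, times `2m + 1`, dominates
`‖Σ B i i‖²` is the weighted Cauchy–Schwarz inequality `‖Σ wᵢ vᵢ‖² ≤ (Σ wᵢ)(Σ wᵢ ‖vᵢ‖²)` with
weight `2` on the first `m` indices and `1` on the last, applied to `vᵢ = B i i / wᵢ`: then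
`Σ wᵢ = 2m + 1` and `Σ wᵢ ‖vᵢ‖²` is exactly that diagonal part. The inequality follows
from the weighted Lagrange identity, which also shows that equality holds iff all `vᵢ` coincide,
i.e. `B i i = 2 • B m m`.
-/

open Finset
open scoped RealInnerProductSpace

section

variable {ι F : Type*} [NormedAddCommGroup F] [InnerProductSpace ℝ F]

theorem Finset.sum_sum_eq_sum_add_sum_offDiag {M : Type*} [AddCommMonoid M] [DecidableEq ι]
    (s : Finset ι) (f : ι → ι → M) :
    ∑ i ∈ s, ∑ j ∈ s, f i j = ∑ i ∈ s, f i i + ∑ p ∈ s.offDiag, f p.1 p.2 := by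
  rw [← sum_product' s s f, ← diag_union_offDiag, sum_union (disjoint_diag_offDiag s), sum_diag]

theorem sum_offDiag_eq_zero_iff_of_nonneg {s : Finset ι} (f : ι → ι → ℝ)
    (hf : ∀ i ∈ s, ∀ j ∈ s, 0 ≤ f i j) :
    ∑ p ∈ s.offDiag, f p.1 p.2 = 0 ↔ ∀ i ∈ s, ∀ j ∈ s, i ≠ j → f i j = 0 := by
  rw [sum_eq_zero_iff_of_nonneg fun p hp ↦ hf _ (mem_offDiag.1 hp).1 _ (mem_offDiag.1 hp).2.1]
  simp only [mem_offDiag, and_imp, Prod.forall]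
  exact ⟨fun h i hi j hj ↦ h i j hi hj, fun h i j hi hj ↦ h i hi j hj⟩

theorem sum_sum_mul_mul_norm_sub_sq (s : Finset ι) (w : ι → ℝ) (v : ι → F) :
    ∑ i ∈ s, ∑ j ∈ s, w i * w j * ‖v i - v j‖ ^ 2
      = 2 * ((∑ i ∈ s, w i) * ∑ i ∈ s, w i * ‖v i‖ ^ 2 - ‖∑ i ∈ s, w i • v i‖ ^ 2) := by
  have hnorm : ‖∑ i ∈ s, w i • v i‖ ^ 2 = ∑ i ∈ s, ∑ j ∈ s, w i * w j * ⟪v i, v j⟫ := by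
    simp_rw [← real_inner_self_eq_norm_sq, sum_inner, inner_sum, real_inner_smul_left,
      real_inner_smul_right, mul_assoc]
  have hsq : ∀ i j, w i * w j * ‖v i - v j‖ ^ 2
      = w i * (w j * ‖v j‖ ^ 2) + w j * (w i * ‖v i‖ ^ 2) - 2 * (w i * w j * ⟪v i, v j⟫) :=
    fun i j ↦ by rw [norm_sub_sq_real]; ring
  simp_rw [hnorm, hsq, sum_sub_distrib, sum_add_distrib, ← mul_sum, ← sum_mul]
  rw [← mul_sum]
  ring

theorem norm_sum_smul_sq_le {s : Finset ι} {w : ι → ℝ} (hw : ∀ i ∈ s, 0 ≤ w i) (v : ι → F) :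
    ‖∑ i ∈ s, w i • v i‖ ^ 2 ≤ (∑ i ∈ s, w i) * ∑ i ∈ s, w i * ‖v i‖ ^ 2 := by
  have hsum : 0 ≤ ∑ i ∈ s, ∑ j ∈ s, w i * w j * ‖v i - v j‖ ^ 2 :=
    sum_nonneg fun i hi ↦ sum_nonneg fun j hj ↦ by have := hw i hi; have := hw j hj; positivity
  linarith [sum_sum_mul_mul_norm_sub_sq s w v]

theorem norm_sum_smul_sq_eq_iff {s : Finset ι} {w : ι → ℝ} (hw : ∀ i ∈ s, 0 < w i) (v : ι → F) :
    ‖∑ i ∈ s, w i • v i‖ ^ 2 = (∑ i ∈ s, w i) * ∑ i ∈ s, w i * ‖v i‖ ^ 2 ↔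
      ∀ i ∈ s, ∀ j ∈ s, v i = v j := by
  have hterm : ∀ i ∈ s, ∀ j ∈ s, 0 ≤ w i * w j * ‖v i - v j‖ ^ 2 := fun i hi j hj ↦ by
    have := hw i hi; have := hw j hj; positivity
  have hzero : ∀ i ∈ s, ∀ j ∈ s, w i * w j * ‖v i - v j‖ ^ 2 = 0 ↔ v i = v j := fun i hi j hj ↦ by
    simp [(hw i hi).ne', (hw j hj).ne', sub_eq_zero]
  calc _ ↔ ∑ i ∈ s, ∑ j ∈ s, w i * w j * ‖v i - v j‖ ^ 2 = 0 := by
        rw [sum_sum_mul_mul_norm_sub_sq]; constructor <;> intro h <;> linarith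
    _ ↔ ∀ i ∈ s, ∀ j ∈ s, v i = v j := by
        rw [sum_eq_zero_iff_of_nonneg fun i hi ↦ sum_nonneg (hterm i hi)]
        refine forall₂_congr fun i hi ↦ ?_
        rw [sum_eq_zero_iff_of_nonneg (hterm i hi)]
        exact forall₂_congr (hzero i hi)

end

section

variable {F : Type*} [NormedAddCommGroup F] [InnerProductSpace ℝ F] (m : ℕ) (d : ℕ → F)

def casoratiWeight (i : ℕ) : ℝ := if i < m then 2 else 1

noncomputable def casoratiRescale (i : ℕ) : F := if i < m then (2 : ℝ)⁻¹ • d i else d i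

theorem casoratiWeight_pos (i : ℕ) : 0 < casoratiWeight m i := by
  unfold casoratiWeight; split_ifs <;> norm_num

theorem sum_casoratiWeight : ∑ i ∈ range (m + 1), casoratiWeight m i = 2 * m + 1 := by
  simp only [casoratiWeight]
  rw [sum_range_succ, sum_ite_of_true fun i hi ↦ mem_range.1 hi, if_neg (lt_irrefl m)]
  simp [mul_comm]

theorem sum_casoratiWeight_smul :
    ∑ i ∈ range (m + 1), casoratiWeight m i • casoratiRescale m d i = ∑ i ∈ range (m + 1), d i := by
  refine sum_congr rfl fun i _ ↦ ?_
  unfold casoratiWeight casoratiRescale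
  split_ifs <;> simp

theorem sum_casoratiWeight_mul_norm_sq :
    ∑ i ∈ range (m + 1), casoratiWeight m i * ‖casoratiRescale m d i‖ ^ 2
      = (∑ i ∈ range m, ‖d i‖ ^ 2) / 2 + ‖d m‖ ^ 2 := by
  rw [sum_range_succ, sum_div]
  congr 1
  · refine sum_congr rfl fun i hi ↦ ?_
    simp only [casoratiWeight, casoratiRescale, if_pos (mem_range.1 hi), norm_smul]
    norm_num
    ring
  · simp [casoratiWeight, casoratiRescale]

theorem norm_sum_range_succ_sq_le :
    ‖∑ i ∈ range (m + 1), d i‖ ^ 2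
      ≤ (2 * m + 1) * ((∑ i ∈ range m, ‖d i‖ ^ 2) / 2 + ‖d m‖ ^ 2) := by
  rw [← sum_casoratiWeight_smul, ← sum_casoratiWeight, ← sum_casoratiWeight_mul_norm_sq]
  exact norm_sum_smul_sq_le (fun i _ ↦ (casoratiWeight_pos m i).le) _

theorem norm_sum_range_succ_sq_eq_iff :
    ‖∑ i ∈ range (m + 1), d i‖ ^ 2 = (2 * m + 1) * ((∑ i ∈ range m, ‖d i‖ ^ 2) / 2 + ‖d m‖ ^ 2)
      ↔ ∀ i < m, d i = (2 : ℝ) • d m := by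
  rw [← sum_casoratiWeight_smul, ← sum_casoratiWeight, ← sum_casoratiWeight_mul_norm_sq,
    norm_sum_smul_sq_eq_iff (fun i _ ↦ casoratiWeight_pos m i)]
  have hlast : casoratiRescale m d m = d m := if_neg (lt_irrefl m)
  have hrescale : ∀ i < m, casoratiRescale m d i = d m ↔ d i = (2 : ℝ) • d m := fun i hi ↦ by
    rw [casoratiRescale, if_pos hi, inv_smul_eq_iff₀ two_ne_zero]
  constructor
  · intro h i hi
    rw [← hrescale i hi, ← hlast]
    exact h i (mem_range.2 (by omega)) m (mem_range.2 (by omega))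
  · intro h
    have hconst : ∀ i ∈ range (m + 1), casoratiRescale m d i = d m := fun i hi ↦ by
      rcases (Nat.lt_succ_iff_lt_or_eq.1 (mem_range.1 hi)) with hi | rfl
      · exact (hrescale i hi).2 (h i hi)
      · exact hlast
    intro i hi j hj
    rw [hconst i hi, hconst j hj]

end

section

variable (f : ℕ → ℕ → ℝ) (m : ℕ)

theorem sum_sum_range_succ_sub_half_sum_sum :
    ∑ i ∈ range (m + 1), ∑ j ∈ range (m + 1), f i j - (∑ i ∈ range m, ∑ j ∈ range m, f i j) / 2
      = (∑ i ∈ range m, f i i) / 2 + f m m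
        + (∑ p ∈ (range (m + 1)).offDiag, f p.1 p.2
            - (∑ p ∈ (range m).offDiag, f p.1 p.2) / 2) := by
  rw [sum_sum_eq_sum_add_sum_offDiag, sum_sum_eq_sum_add_sum_offDiag, sum_range_succ]
  ring

variable {f}

theorem sum_offDiag_range_le_succ (hf : ∀ i j, 0 ≤ f i j) :
    ∑ p ∈ (range m).offDiag, f p.1 p.2 ≤ ∑ p ∈ (range (m + 1)).offDiag, f p.1 p.2 :=
  sum_le_sum_of_subset_of_nonneg (offDiag_mono (range_mono m.le_succ)) fun _ _ _ ↦ hf _ _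

theorem half_sum_diag_add_le_sum_sum_sub_half (hf : ∀ i j, 0 ≤ f i j) :
    (∑ i ∈ range m, f i i) / 2 + f m m
      ≤ ∑ i ∈ range (m + 1), ∑ j ∈ range (m + 1), f i j
          - (∑ i ∈ range m, ∑ j ∈ range m, f i j) / 2 := by
  have hoff := sum_nonneg fun (p : ℕ × ℕ) (_ : p ∈ (range m).offDiag) ↦ hf p.1 p.2
  linarith [sum_sum_range_succ_sub_half_sum_sum f m, sum_offDiag_range_le_succ m hf]

theorem half_sum_diag_add_eq_sum_sum_sub_half_iff (hf : ∀ i j, 0 ≤ f i j) :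
    (∑ i ∈ range m, f i i) / 2 + f m m
        = ∑ i ∈ range (m + 1), ∑ j ∈ range (m + 1), f i j
          - (∑ i ∈ range m, ∑ j ∈ range m, f i j) / 2
      ↔ ∀ i < m + 1, ∀ j < m + 1, i ≠ j → f i j = 0 := by
  have hoff := sum_nonneg fun (p : ℕ × ℕ) (_ : p ∈ (range m).offDiag) ↦ hf p.1 p.2
  have hmono := sum_offDiag_range_le_succ m hf
  simp only [← mem_range]
  rw [sum_sum_range_succ_sub_half_sum_sum,
    ← sum_offDiag_eq_zero_iff_of_nonneg _ fun i _ j _ ↦ hf i j]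
  constructor <;> intro h <;> linarith

end

theorem casorati_Q_nonneg_general
    (r : ℕ)
    {F : Type*} [NormedAddCommGroup F] [InnerProductSpace ℝ F]
    (B : ℕ → ℕ → F) :
    ‖∑ i ∈ Finset.range r, B i i‖ ^ 2
      ≤ (2 * (r : ℝ) - 1) *
          (∑ i ∈ Finset.range r, ∑ j ∈ Finset.range r, ‖B i j‖ ^ 2)
        - ((2 * (r : ℝ) - 1) / 2) *
          (∑ i ∈ Finset.range (r - 1), ∑ j ∈ Finset.range (r - 1), ‖B i j‖ ^ 2)
    ∧ (‖∑ i ∈ Finset.range r, B i i‖ ^ 2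
        = (2 * (r : ℝ) - 1) *
            (∑ i ∈ Finset.range r, ∑ j ∈ Finset.range r, ‖B i j‖ ^ 2)
          - ((2 * (r : ℝ) - 1) / 2) *
            (∑ i ∈ Finset.range (r - 1), ∑ j ∈ Finset.range (r - 1), ‖B i j‖ ^ 2)
      ↔ (∀ i < r, ∀ j < r, i ≠ j → B i j = 0)
        ∧ ∀ i < r - 1, B i i = (2 : ℝ) • B (r - 1) (r - 1)) := by
  rcases r with _ | m
  · simp
  have hnonneg (i j : ℕ) : 0 ≤ ‖B i j‖ ^ 2 := sq_nonneg _
  have hdiag := half_sum_diag_add_le_sum_sum_sub_half m hnonneg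
  have hdiag_eq := half_sum_diag_add_eq_sum_sum_sub_half_iff m hnonneg
  have htrace := norm_sum_range_succ_sq_le m fun i ↦ B i i
  simp only [sq_eq_zero_iff, norm_eq_zero] at hdiag_eq
  set D := (∑ i ∈ range m, ‖B i i‖ ^ 2) / 2 + ‖B m m‖ ^ 2
  set S := ∑ i ∈ range (m + 1), ∑ j ∈ range (m + 1), ‖B i j‖ ^ 2
    - (∑ i ∈ range m, ∑ j ∈ range m, ‖B i j‖ ^ 2) / 2
  have hc : (0 : ℝ) < 2 * m + 1 := by positivity
  have hrhs : (2 * ((m + 1 : ℕ) : ℝ) - 1) * (∑ i ∈ range (m + 1), ∑ j ∈ range (m + 1), ‖B i j‖ ^ 2)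
      - ((2 * ((m + 1 : ℕ) : ℝ) - 1) / 2) * (∑ i ∈ range m, ∑ j ∈ range m, ‖B i j‖ ^ 2)
      = (2 * m + 1) * S := by
    push_cast
    ring
  rw [Nat.add_sub_cancel, hrhs, ← hdiag_eq, ← norm_sum_range_succ_sq_eq_iff]
  refine ⟨htrace.trans (by gcongr), fun h ↦ ?_, fun ⟨hDS, hN⟩ ↦ hN.trans (congrArg _ hDS)⟩
  have hDS : D = S := le_antisymm hdiag (le_of_mul_le_mul_left (h ▸ htrace) hc)
  exact ⟨hDS, h.trans (congrArg _ hDS.symm)⟩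

/-- Nonnegativity of the polynomial `𝒬` in the proof of Theorem 2.1, for a symmetric
system of vectors `B i j` in a real inner product space. -/
theorem casorati_Q_nonneg
    (r : ℕ) (hr : 3 ≤ r)
    {F : Type*} [NormedAddCommGroup F] [InnerProductSpace ℝ F]
    (B : ℕ → ℕ → F) (hB : ∀ i < r, ∀ j < r, B i j = B j i) :
    ‖∑ i ∈ Finset.range r, B i i‖ ^ 2
      ≤ (2 * (r : ℝ) - 1) *
          (∑ i ∈ Finset.range r, ∑ j ∈ Finset.range r, ‖B i j‖ ^ 2)
        - ((2 * (r : ℝ) - 1) / 2) *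
          (∑ i ∈ Finset.range (r - 1), ∑ j ∈ Finset.range (r - 1), ‖B i j‖ ^ 2)
    ∧ (‖∑ i ∈ Finset.range r, B i i‖ ^ 2
        = (2 * (r : ℝ) - 1) *
            (∑ i ∈ Finset.range r, ∑ j ∈ Finset.range r, ‖B i j‖ ^ 2)
          - ((2 * (r : ℝ) - 1) / 2) *
            (∑ i ∈ Finset.range (r - 1), ∑ j ∈ Finset.range (r - 1), ‖B i j‖ ^ 2)
      ↔ (∀ i < r, ∀ j < r, i ≠ j → B i j = 0)
        ∧ ∀ i < r - 1, B i i = (2 : ℝ) • B (r - 1) (r - 1)) :=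
  casorati_Q_nonneg_general r B
end

section
/- Let r ≥ 3 be an integer, E an r-dimensional real inner product space, F a real inner product space, and B : E × E → F a symmetric bilinear map. For a nonzero finite-dimensional subspace L of E of dimension k, set C(L) = (1/k) Σ_{i,j=1}^{k} ‖B(u_i, u_j)‖² for any orthonormal basis (u_1, …, u_k) of L (this value does not depend on the chosen orthonormal basis). Let T = Σ_{i=1}^{r} B(e_i, e_i) for an orthonormal basis (e_1, …, e_r) of E (T is independent of the basis). Then ‖T‖² ≤ r(r−1) · [ 2 C(E) − ((2r−1)/(2r)) · sup { C(L) : L a hyperplane of E } ] + r · C(E). -/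
/-!
Fix a hyperplane `L` and an orthonormal basis `b₀, …, b_m` of `E` (with `m = r - 1`) whose first
`m` vectors span `L`. Cauchy–Schwarz bounds the part of the trace coming from `L` by
`m · ∑_{i<m} ‖B(bᵢ, bᵢ)‖²`, and splitting the cross term with `B(b_m, b_m)` by AM–GM with weight
`2m` gives `‖T‖² + m(2m+1)/2 · C(L) ≤ (m+1)(2m+1) · C(E)`, since `m · C(L)` and `(m+1) · C(E)`
are the sums of `‖B(bᵢ, bⱼ)‖²` over the block of `L` and over all of `E`. Taking the supremum
over `L` and rewriting the constants gives the bound.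
-/

open Finset Module RealInnerProductSpace

lemma add_sq_le_of_sq_le_mul {a c D m : ℝ} (hm : 0 < m) (h : a ^ 2 ≤ m * D) :
    (a + c) ^ 2 ≤ (2 * m + 1) / 2 * D + (2 * m + 1) * c ^ 2 := by
  -- `2ac ≤ a² / (2m) + 2m c²`
  nlinarith [sq_nonneg (a - 2 * m * c)]

lemma norm_sum_sq_le_card_mul_sum_norm_sq {ι F : Type*} [SeminormedAddCommGroup F]
    (s : Finset ι) (f : ι → F) :
    ‖∑ i ∈ s, f i‖ ^ 2 ≤ #s * ∑ i ∈ s, ‖f i‖ ^ 2 :=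
  (pow_le_pow_left₀ (norm_nonneg _) (norm_sum_le s f) 2).trans (sq_sum_le_card_mul_sum_sq ..)

lemma OrthonormalBasis.sum_apply_self_eq {ι ι' E F : Type*} [Fintype ι] [Fintype ι']
    [NormedAddCommGroup E] [InnerProductSpace ℝ E] [AddCommGroup F] [Module ℝ F]
    (B : E →ₗ[ℝ] E →ₗ[ℝ] F) (b : OrthonormalBasis ι ℝ E) (e : OrthonormalBasis ι' ℝ E) :
    ∑ i, B (b i) (b i) = ∑ j, B (e j) (e j) := by
  calc ∑ i, B (b i) (b i) = ∑ i, B (∑ j, ⟪e j, b i⟫ • e j) (b i) := by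
        simp only [e.sum_repr']
    _ = ∑ j, B (e j) (∑ i, ⟪b i, e j⟫ • b i) := by
        simp only [map_sum, LinearMap.sum_apply, map_smul, LinearMap.smul_apply,
          real_inner_comm (b _)]
        exact Finset.sum_comm
    _ = ∑ j, B (e j) (e j) := by simp only [b.sum_repr']

lemma Submodule.exists_orthonormalBasis_castSucc_eq {𝕜 E : Type*} [RCLike 𝕜]
    [NormedAddCommGroup E] [InnerProductSpace 𝕜 E] [FiniteDimensional 𝕜 E] {m : ℕ}
    (hE : finrank 𝕜 E = m + 1) {L : Submodule 𝕜 E} (f : OrthonormalBasis (Fin m) 𝕜 L) :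
    ∃ b : OrthonormalBasis (Fin (m + 1)) 𝕜 E, ∀ i, b i.castSucc = f i := by
  let v : Fin (m + 1) → E := Fin.lastCases 0 fun i ↦ f i
  have hv : Orthonormal 𝕜 ((Set.range Fin.castSucc).domRestrict v) := by
    have := (f.orthonormal.comp_linearIsometry L.subtypeₗᵢ).comp _
      (Equiv.ofInjective _ (Fin.castSucc_injective m)).symm.injective
    convert this using 1
    ext ⟨_, i, rfl⟩
    simp [Set.domRestrict, v]
  obtain ⟨b, hb⟩ := hv.exists_orthonormalBasis_extension_of_card_eq (by simpa using hE)
  exact ⟨b, fun i ↦ by simpa [v] using hb _ (Set.mem_range_self i)⟩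

lemma norm_sum_diag_sq_add_le {F : Type*} [SeminormedAddCommGroup F] {m : ℕ} (hm : 0 < m)
    (x : Fin (m + 1) → Fin (m + 1) → F) :
    ‖∑ i, x i i‖ ^ 2 + (2 * m + 1) / 2 * ∑ i : Fin m, ∑ j : Fin m, ‖x i.castSucc j.castSucc‖ ^ 2
      ≤ (2 * m + 1) * ∑ i, ∑ j, ‖x i j‖ ^ 2 := by
  set D := ∑ i : Fin m, ‖x i.castSucc i.castSucc‖ ^ 2
  set SL := ∑ i : Fin m, ∑ j : Fin m, ‖x i.castSucc j.castSucc‖ ^ 2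
  set q := ‖x (Fin.last m) (Fin.last m)‖ ^ 2
  have h_diag : D ≤ SL := sum_le_sum fun i _ ↦
    single_le_sum (f := fun j ↦ ‖x i.castSucc j.castSucc‖ ^ 2) (fun _ _ ↦ by positivity)
      (mem_univ i)
  have h_block : SL + q ≤ ∑ i, ∑ j, ‖x i j‖ ^ 2 := by
    simp only [Fin.sum_univ_castSucc, sum_add_distrib]
    have : 0 ≤ ∑ i : Fin m, ‖x i.castSucc (Fin.last m)‖ ^ 2 := by positivity
    have : 0 ≤ ∑ j : Fin m, ‖x (Fin.last m) j.castSucc‖ ^ 2 := by positivity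
    linarith
  have h_trace : ‖∑ i, x i i‖ ^ 2 ≤ (2 * m + 1) / 2 * D + (2 * m + 1) * q := by
    rw [Fin.sum_univ_castSucc]
    have h_cs := norm_sum_sq_le_card_mul_sum_norm_sq univ fun i : Fin m ↦ x i.castSucc i.castSucc
    rw [card_univ, Fintype.card_fin] at h_cs
    calc _ ≤ (‖∑ i : Fin m, x i.castSucc i.castSucc‖ + ‖x (Fin.last m) (Fin.last m)‖) ^ 2 :=
          pow_le_pow_left₀ (norm_nonneg _) (norm_add_le _ _) 2
      _ ≤ _ := add_sq_le_of_sq_le_mul (by exact_mod_cast hm) h_cs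
  have hk : (0 : ℝ) ≤ (2 * m + 1) / 2 := by positivity
  linarith [mul_le_mul_of_nonneg_left h_diag hk, mul_le_mul_of_nonneg_left h_block hk]

section Casorati

variable {E F : Type*} [NormedAddCommGroup E] [InnerProductSpace ℝ E]
  [NormedAddCommGroup F] [InnerProductSpace ℝ F]
  {B : E →ₗ[ℝ] E →ₗ[ℝ] F} {C : Submodule ℝ E → ℝ}

lemma casorati_top_eq
    (hC : ∀ (L : Submodule ℝ E) (n : ℕ), 0 < n →
      ∀ u : OrthonormalBasis (Fin n) ℝ L,
        C L = (1 / (n : ℝ)) * ∑ i, ∑ j, ‖B (u i : E) (u j : E)‖ ^ 2)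
    {n : ℕ} (hn : 0 < n) (b : OrthonormalBasis (Fin n) ℝ E) :
    C ⊤ = (1 / (n : ℝ)) * ∑ i, ∑ j, ‖B (b i) (b j)‖ ^ 2 := by
  rw [hC ⊤ n hn (b.map (LinearIsometryEquiv.ofTop E ⊤ rfl).symm)]
  rfl

lemma norm_trace_sq_add_casorati_le [FiniteDimensional ℝ E]
    (hC : ∀ (L : Submodule ℝ E) (n : ℕ), 0 < n →
      ∀ u : OrthonormalBasis (Fin n) ℝ L,
        C L = (1 / (n : ℝ)) * ∑ i, ∑ j, ‖B (u i : E) (u j : E)‖ ^ 2)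
    {m : ℕ} (hm : 0 < m) (e : OrthonormalBasis (Fin (m + 1)) ℝ E)
    {L : Submodule ℝ E} (hL : finrank ℝ L = m) :
    ‖∑ i, B (e i) (e i)‖ ^ 2 + m * (2 * m + 1) / 2 * C L ≤ (m + 1) * (2 * m + 1) * C ⊤ := by
  let f := (stdOrthonormalBasis ℝ L).reindex (finCongr hL)
  obtain ⟨b, hbf⟩ := L.exists_orthonormalBasis_castSucc_eq
    (by simp [finrank_eq_card_basis e.toBasis]) f
  have hCL : C L = 1 / m * ∑ i : Fin m, ∑ j : Fin m, ‖B (b i.castSucc) (b j.castSucc)‖ ^ 2 := by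
    simp only [hC L m hm f, hbf]
  have hCtop := casorati_top_eq hC m.succ_pos b
  rw [← b.sum_apply_self_eq B e, hCL, hCtop]
  have hm' : (0 : ℝ) < m := by exact_mod_cast hm
  have h_matrix := norm_sum_diag_sq_add_le hm fun i j ↦ B (b i) (b j)
  push_cast
  field_simp
  linarith

end Casorati

theorem casorati_trace_bound_sup_general
    (r : ℕ) (hr : 3 ≤ r)
    {E F : Type*} [NormedAddCommGroup E] [InnerProductSpace ℝ E]
    [NormedAddCommGroup F] [InnerProductSpace ℝ F]
    [FiniteDimensional ℝ E]
    (B : E →ₗ[ℝ] E →ₗ[ℝ] F)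
    (C : Submodule ℝ E → ℝ)
    (hC : ∀ (L : Submodule ℝ E) (n : ℕ), 0 < n →
      ∀ u : OrthonormalBasis (Fin n) ℝ L,
        C L = (1 / (n : ℝ)) * ∑ i, ∑ j, ‖B (u i : E) (u j : E)‖ ^ 2)
    (e : OrthonormalBasis (Fin r) ℝ E) :
    ‖∑ i, B (e i) (e i)‖ ^ 2
      ≤ (r : ℝ) * ((r : ℝ) - 1) *
          (2 * C ⊤
            - ((2 * (r : ℝ) - 1) / (2 * (r : ℝ))) *
                sSup {x : ℝ | ∃ L : Submodule ℝ E, Module.finrank ℝ L = r - 1 ∧ C L = x})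
        + (r : ℝ) * C ⊤ := by
  obtain ⟨m, rfl⟩ : ∃ m, r = m + 1 := ⟨r - 1, by omega⟩
  have hm : 0 < m := by omega
  rw [Nat.add_sub_cancel]
  set S := {x : ℝ | ∃ L : Submodule ℝ E, finrank ℝ L = m ∧ C L = x}
  set T := ∑ i, B (e i) (e i)
  have hS_nonempty : S.Nonempty :=
    ⟨_, Submodule.span ℝ (Set.range (e ∘ Fin.castSucc)), by
      rw [finrank_span_eq_card (e.orthonormal.linearIndependent.comp _ (Fin.castSucc_injective m))]
      simp, rfl⟩
  have hS_le : sSup S * (m * (2 * m + 1) / 2) ≤ (m + 1) * (2 * m + 1) * C ⊤ - ‖T‖ ^ 2 := by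
    rw [← le_div_iff₀ (by positivity)]
    refine csSup_le hS_nonempty ?_
    rintro _ ⟨L, hL, rfl⟩
    rw [le_div_iff₀ (by positivity)]
    linarith [norm_trace_sq_add_casorati_le hC hm e hL]
  push_cast
  field_simp
  linarith

/-- Algebraic core of the second inequality of Theorem 2.1: for a symmetric bilinear map
`B` on an `r`-dimensional real inner product space `E` with values in a real inner
product space `F`, with Casorati curvature `C L` of a subspace `L` computed from any
orthonormal basis of `L`, the squared norm of the trace of `B` is bounded using the
supremum of the Casorati curvatures of the hyperplanes of `E`. -/
theorem casorati_trace_bound_sup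
    (r : ℕ) (hr : 3 ≤ r)
    {E F : Type*} [NormedAddCommGroup E] [InnerProductSpace ℝ E]
    [NormedAddCommGroup F] [InnerProductSpace ℝ F]
    [FiniteDimensional ℝ E] (hdim : Module.finrank ℝ E = r)
    (B : E →ₗ[ℝ] E →ₗ[ℝ] F) (hB : ∀ x y : E, B x y = B y x)
    (C : Submodule ℝ E → ℝ)
    (hC : ∀ (L : Submodule ℝ E) (n : ℕ), 0 < n →
      ∀ u : OrthonormalBasis (Fin n) ℝ L,
        C L = (1 / (n : ℝ)) * ∑ i, ∑ j, ‖B (u i : E) (u j : E)‖ ^ 2)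
    (e : OrthonormalBasis (Fin r) ℝ E) :
    ‖∑ i, B (e i) (e i)‖ ^ 2
      ≤ (r : ℝ) * ((r : ℝ) - 1) *
          (2 * C ⊤
            - ((2 * (r : ℝ) - 1) / (2 * (r : ℝ))) *
                sSup {x : ℝ | ∃ L : Submodule ℝ E, Module.finrank ℝ L = r - 1 ∧ C L = x})
        + (r : ℝ) * C ⊤ :=
  casorati_trace_bound_sup_general r hr B C hC e
end
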